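/- Let A be a G-graded ring, n ∈ ℕ, and give the matrix ring M_n(A) the G-grading with homogeneous components M_n(A_g). Then A is epsilon-strongly graded if and only if M_n(A) is epsilon-strongly graded. -/
import Mathlib


/-- A `G`-grading on a unital ring `A`: a family of additive subgroups with
`A_g A_h ⊆ A_{gh}`, `1 ∈ A₁`, whose internal direct sum is `A`. -/
structure RingGrading (G : Type*) [Group G] [DecidableEq G]
    (A : Type*) [Ring A] where
  comp : G → AddSubgroup A
  one_mem : (1 : A) ∈ comp 1
  mul_mem : ∀ ⦃g h : G⦄ ⦃a b : A⦄, a ∈ comp g → b ∈ comp h → a * b ∈ comp (g * h)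
  isInternal : DirectSum.IsInternal comp

variable {G : Type*} [Group G] [DecidableEq G] {A : Type*} [Ring A]

/-- The additive subgroup `S T` generated by products of elements of `S` and `T`. -/
def sgMul (S T : AddSubgroup A) : AddSubgroup A :=
  AddSubgroup.closure {x : A | ∃ s ∈ S, ∃ t ∈ T, x = s * t}

/-- `ε` is a family of epsilon-elements for the grading `𝒜`:
`ε_g ∈ A_g A_{g⁻¹}` and `ε_g a = a = a ε_{g⁻¹}` for all `a ∈ A_g`. -/
structure IsEpsilonFamily (𝒜 : RingGrading G A) (ε : G → A) : Prop where
  mem : ∀ g : G, ε g ∈ sgMul (𝒜.comp g) (𝒜.comp g⁻¹)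
  mul_left : ∀ g : G, ∀ a ∈ 𝒜.comp g, ε g * a = a
  mul_right : ∀ g : G, ∀ a ∈ 𝒜.comp g, a * ε g⁻¹ = a

/-- `𝒜` is an epsilon-strongly graded ring. -/
def IsEpsilonStrong (𝒜 : RingGrading G A) : Prop :=
  ∃ ε : G → A, IsEpsilonFamily 𝒜 ε

/-- For `n ≥ 1`, a graded ring `A` is epsilon-strongly graded iff
the matrix ring `Mₙ(A)`, graded by `Mₙ(A)_g = Mₙ(A_g)`, is epsilon-strongly graded. -/
theorem isEpsilonStrong_iff_matrix (𝒜 : RingGrading G A) (n : ℕ) (hn : 0 < n)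
    (ℬ : RingGrading G (Matrix (Fin n) (Fin n) A))
    (hcomp : ∀ (g : G) (X : Matrix (Fin n) (Fin n) A),
      X ∈ ℬ.comp g ↔ ∀ i j : Fin n, X i j ∈ 𝒜.comp g) :
    IsEpsilonStrong 𝒜 ↔ IsEpsilonStrong ℬ := by
  constructor
  · rintro ⟨ε, hmem, hl, hr⟩
    refine ⟨fun g => Matrix.scalar (Fin n) (ε g), ?_, ?_, ?_⟩
    · intro g
      have hsc : ∀ (h : G) (a : A), a ∈ 𝒜.comp h →
          (Matrix.scalar (Fin n) a : Matrix (Fin n) (Fin n) A) ∈ ℬ.comp h := by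
        intro h a ha
        rw [hcomp]
        intro i j
        by_cases hij : i = j
        · subst hij; simpa using ha
        · rw [Matrix.scalar_apply, Matrix.diagonal_apply_ne _ hij]
          exact AddSubgroup.zero_mem _
      refine AddSubgroup.closure_induction ?_ ?_ ?_ ?_ (hmem g)
      · rintro x ⟨s, hs, t, ht, rfl⟩
        rw [map_mul]
        exact AddSubgroup.subset_closure ⟨_, hsc g s hs, _, hsc g⁻¹ t ht, rfl⟩
      · rw [map_zero]; exact AddSubgroup.zero_mem _
      · intro x y _ _ hx hy
        rw [map_add]; exact AddSubgroup.add_mem _ hx hy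
      · intro x _ hx
        rw [map_neg]; exact AddSubgroup.neg_mem _ hx
    · intro g X hX
      ext i j
      rw [Matrix.scalar_apply, Matrix.diagonal_mul]
      exact hl g (X i j) ((hcomp g X).1 hX i j)
    · intro g X hX
      ext i j
      rw [Matrix.scalar_apply, Matrix.mul_diagonal]
      exact hr g (X i j) ((hcomp g X).1 hX i j)
  · rintro ⟨E, hmem, hl, hr⟩
    set z : Fin n := ⟨0, hn⟩
    have hXmem : ∀ (g : G) (a : A), a ∈ 𝒜.comp g →
        (Matrix.single z z a) ∈ ℬ.comp g := by
      intro g a ha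
      rw [hcomp]
      intro i j
      show (if z = i ∧ z = j then a else 0) ∈ 𝒜.comp g
      split_ifs with h
      · exact ha
      · exact AddSubgroup.zero_mem _
    refine ⟨fun g => E g z z, ?_, ?_, ?_⟩
    · intro g
      refine AddSubgroup.closure_induction ?_ ?_ ?_ ?_ (hmem g)
      · rintro X ⟨S, hS, T, hT, rfl⟩
        rw [Matrix.mul_apply]
        exact AddSubgroup.sum_mem _ fun k _ => AddSubgroup.subset_closure
          ⟨S z k, (hcomp g S).1 hS z k, T k z, (hcomp g⁻¹ T).1 hT k z, rfl⟩
      · exact AddSubgroup.zero_mem _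
      · intro X Y _ _ hX hY
        exact AddSubgroup.add_mem _ hX hY
      · intro X _ hX
        exact AddSubgroup.neg_mem _ hX
    · intro g a ha
      have h2 := congrFun (congrFun (hl g _ (hXmem g a ha)) z) z
      rw [Matrix.mul_apply] at h2
      have h3 : ∑ k, E g z k * Matrix.single z z a k z = E g z z * a := by
        rw [Finset.sum_eq_single z]
        · rw [Matrix.single_apply_same]
        · intro k _ hk
          have hz : Matrix.single z z a k z = 0 := by
            show (if z = k ∧ z = z then a else 0) = 0
            rw [if_neg]; exact fun h => hk h.1.symm
          rw [hz, mul_zero]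
        · intro h; exact absurd (Finset.mem_univ z) h
      rw [h3] at h2
      simpa using h2
    · intro g a ha
      have h2 := congrFun (congrFun (hr g _ (hXmem g a ha)) z) z
      rw [Matrix.mul_apply] at h2
      have h3 : ∑ k, Matrix.single z z a z k * E g⁻¹ k z = a * E g⁻¹ z z := by
        rw [Finset.sum_eq_single z]
        · rw [Matrix.single_apply_same]
        · intro k _ hk
          have hz : Matrix.single z z a z k = 0 := by
            show (if z = z ∧ z = k then a else 0) = 0
            rw [if_neg]; exact fun h => hk h.2.symm
          rw [hz, zero_mul]
        · intro h; exact absurd (Finset.mem_univ z) h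
      rw [h3] at h2
      simpa using h2
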